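/- arXiv:1909.04651 — 4 statements merged into one kernel-verified Lean document; each statement's English description precedes it below -/
import Mathlib

section
/- Let β > 0, C_K > 0, p₀ > 1, F ≥ 0 and ν ≥ 0, and set t* := β(p₀ − 1)/(2p₀). There exist constants C₁, C₂ ≥ 0, depending only on p₀, β, C_K and F, such that the following holds for any T ≥ t*. Let u be a smooth time-dependent divergence-free vector field on [0,T]×𝕋² satisfying ∫_{𝕋²} exp(β |∇u(x,t)|) dx ≤ C_K for every t ∈ [0,T]. Let f be measurable with |f(x,t)| ≤ F on [0,T]×𝕋², and let θ : [0,T]×𝕋² → [0,∞) be smooth, nonnegative, and satisfy the pointwise differential inequality ∂_tθ + u·∇θ − νΔθ ≤ |∇u| θ + f on [0,T]×𝕋². Then sup_{t∈[0,t*]} ‖θ(·,t)‖_{L²(𝕋²)} ≤ C₁ ‖θ(·,0)‖_{L^{2p₀}(𝕋²)}^{p₀} + C₂. -/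
open MeasureTheory Filter Topology ENNReal

noncomputable section

/-- The plane `ℝ²` with the Euclidean norm. -/
abbrev E2 : Type := EuclideanSpace ℝ (Fin 2)

/-- A fundamental domain for the torus `𝕋² = ℝ²/ℤ²`. -/
def T2 : Set E2 := {x | ∀ i, x i ∈ Set.Ico (0:ℝ) 1}

/-- Lebesgue measure on the torus (Lebesgue measure on a fundamental domain). -/
def μT : Measure E2 := volume.restrict T2

/-- The vector of ℝ² with integer coordinates `k`. -/
def ivec (k : Fin 2 → ℤ) : E2 := WithLp.toLp 2 (fun i => (k i : ℝ))

/-- ℤ²-periodicity for scalar functions (i.e. functions on the torus). -/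
def Periodic2 (f : E2 → ℝ) : Prop := ∀ (x : E2) (k : Fin 2 → ℤ), f (x + ivec k) = f x

/-- ℤ²-periodicity for vector fields. -/
def PeriodicV (u : E2 → E2) : Prop := ∀ (x : E2) (k : Fin 2 → ℤ), u (x + ivec k) = u x

/-- Partial derivative `∂ᵢ f`. -/
def pd (f : E2 → ℝ) (i : Fin 2) (x : E2) : ℝ := fderiv ℝ f x (EuclideanSpace.single i 1)

/-- Laplacian. -/
def lap (f : E2 → ℝ) (x : E2) : ℝ := ∑ i, pd (fun y => pd f i y) i x

/-- Advective derivative `u·∇f`. -/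
def advect (u : E2 → E2) (f : E2 → ℝ) (x : E2) : ℝ := ∑ i, u x i * pd f i x

/-- Divergence of a vector field. -/
def divergence (u : E2 → E2) (x : E2) : ℝ := ∑ i, pd (fun y => u y i) i x

/-- Two-dimensional curl, `∂₁u₂ - ∂₂u₁`. -/
def curl2 (u : E2 → E2) (x : E2) : ℝ :=
  pd (fun y => u y 1) 0 x - pd (fun y => u y 0) 1 x

/-- Frobenius norm of the velocity gradient matrix `|∇u|`. -/
def gradVNorm (u : E2 → E2) (x : E2) : ℝ :=
  Real.sqrt (∑ i, ∑ j, (pd (fun y => u y i) j x) ^ 2)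

/-- Euclidean norm of the gradient of a scalar, `|∇f|`. -/
def gradSNorm (f : E2 → ℝ) (x : E2) : ℝ :=
  Real.sqrt (∑ i, (pd f i x) ^ 2)

/-- A smooth bounded forcing on `[0,T] × 𝕋²`. -/
structure IsSmoothForcing (T : ℝ) (g : ℝ → E2 → ℝ) : Prop where
  smooth : ContDiff ℝ (⊤ : ℕ∞) (fun q : ℝ × E2 => g q.1 q.2)
  periodic : ∀ t, Periodic2 (g t)
  bounded : ∃ M : ℝ, ∀ t ∈ Set.Icc 0 T, ∀ x, |g t x| ≤ M

/-- A classical solution `(u, ω)` of the 2D vorticity equation with viscosity `ν` on `[0,T]`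
with forcing `g`: smooth on `(0,T] × 𝕋²`, continuous at `t = 0` in `L²`, divergence free,
`curl u = ω`, and `∂ₜω + u·∇ω = νΔω + g` pointwise on `(0,T] × 𝕋²`. -/
structure IsClassicalVorticitySol (ν T : ℝ) (g : ℝ → E2 → ℝ)
    (u : ℝ → E2 → E2) (ω : ℝ → E2 → ℝ) : Prop where
  smooth_u : ContDiffOn ℝ (⊤ : ℕ∞) (fun q : ℝ × E2 => u q.1 q.2)
      (Set.Ioc 0 T ×ˢ (Set.univ : Set E2))
  smooth_ω : ContDiffOn ℝ (⊤ : ℕ∞) (fun q : ℝ × E2 => ω q.1 q.2)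
      (Set.Ioc 0 T ×ˢ (Set.univ : Set E2))
  periodic_u : ∀ t, PeriodicV (u t)
  periodic_ω : ∀ t, Periodic2 (ω t)
  meas_ω0 : Measurable (ω 0)
  divFree : ∀ t ∈ Set.Ioc 0 T, ∀ x, divergence (u t) x = 0
  curl_eq : ∀ t ∈ Set.Ioc 0 T, ∀ x, curl2 (u t) x = ω t x
  init : Tendsto (fun t => eLpNorm (fun x => ω t x - ω 0 x) 2 μT) (𝓝[>] 0) (𝓝 0)
  pde : ∀ t ∈ Set.Ioc 0 T, ∀ x : E2,
    HasDerivWithinAt (fun s => ω s x)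
      (ν * lap (ω t) x + g t x - advect (u t) (ω t) x) (Set.Ioc 0 T) t

/-- A Yudovich weak solution `(u, ω)` of the 2D Euler equations on `[0,T]` with forcing `g`
and initial vorticity `ω₀ ∈ L^∞(𝕋²)`. -/
structure IsYudovichSol (T : ℝ) (g : ℝ → E2 → ℝ) (ω₀ : E2 → ℝ)
    (u : ℝ → E2 → E2) (ω : ℝ → E2 → ℝ) : Prop where
  meas_ω : Measurable (fun q : ℝ × E2 => ω q.1 q.2)
  bdd_ω : ∃ M : ℝ, ∀ t ∈ Set.Icc 0 T, ∀ x, |ω t x| ≤ M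
  periodic_ω : ∀ t, Periodic2 (ω t)
  meas_u : ∀ t, Measurable (u t)
  memL2_u : ∀ t ∈ Set.Icc 0 T, eLpNorm (u t) 2 μT ≠ ⊤
  zeroMean_u : ∀ t ∈ Set.Icc 0 T, ∫ x, u t x ∂μT = 0
  periodic_u : ∀ t, PeriodicV (u t)
  divFree_weak : ∀ t ∈ Set.Icc 0 T, ∀ φ : E2 → ℝ, ContDiff ℝ (⊤ : ℕ∞) φ → Periodic2 φ →
    ∫ x, (∑ i, u t x i * pd φ i x) ∂μT = 0
  curl_weak : ∀ t ∈ Set.Icc 0 T, ∀ φ : E2 → ℝ, ContDiff ℝ (⊤ : ℕ∞) φ → Periodic2 φ →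
    ∫ x, ω t x * φ x ∂μT = ∫ x, (u t x 0 * pd φ 1 x - u t x 1 * pd φ 0 x) ∂μT
  weakForm : ∀ φ : E2 → ℝ, ContDiff ℝ (⊤ : ℕ∞) φ → Periodic2 φ → ∀ t ∈ Set.Icc 0 T,
    (∫ x, ω t x * φ x ∂μT) - (∫ x, ω₀ x * φ x ∂μT)
      = ∫ s in (0:ℝ)..t, (∫ x, (ω s x * advect (u s) φ x + g s x * φ x) ∂μT)

end

/-!
Fix `ε > 0` and the exponent `p(t)` with `1 / p(t) = 1 / (2 p₀) + t / β`, so that `p(0) = 2 p₀`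
and `p(t*) = 2`. The norm `X(t) = ‖θ(t) + ε‖_{L^{p(t)}}` satisfies `X' ≤ (C_K / β) X + F`.
Differentiating `∫ (θ + ε)^{p(t)}` in time, the diffusion term has a sign and the transport term
integrates to zero because `div u = 0`, while the forcing is controlled by Jensen's inequality.
The amplification `∫ |∇u| (θ + ε)^p` is absorbed by the entropy term coming from
`p' = -p² / β`, through Young's inequality `a b ≤ eᵃ + b log b` and `∫ exp (β |∇u|) ≤ C_K`.
Grönwall's inequality bounds `X` on `[0, t*]`, and `‖θ(t)‖_{L²} ≤ X(t)` since `p(t) ≥ 2`.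
-/

open Set Real Function MeasureTheory Metric
open scoped ContDiff

noncomputable section

lemma measurableSet_T2 : MeasurableSet T2 := by
  simp only [T2, ofPred_forall]
  exact .iInter fun i =>
    measurableSet_Ico.preimage (by fun_prop : Continuous fun x : E2 => x i).measurable

instance : IsProbabilityMeasure μT := by
  constructor
  have hT2 : T2 = (MeasurableEquiv.toLp 2 (Fin 2 → ℝ)).symm ⁻¹' univ.pi fun _ => Ico (0:ℝ) 1 := by
    ext x; simp [T2, Set.mem_pi]
  rw [μT, Measure.restrict_apply_univ, hT2,
    (EuclideanSpace.volume_preserving_symm_measurableEquiv_toLp (Fin 2)).measure_preimage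
      (MeasurableSet.univ_pi fun _ => measurableSet_Ico).nullMeasurableSet, volume_pi_pi]
  simp

lemma exists_isCompact_superset_T2 : ∃ K, IsCompact K ∧ T2 ⊆ K :=
  ⟨WithLp.toLp 2 '' univ.pi fun _ => Icc (0:ℝ) 1,
    (isCompact_univ_pi fun _ => isCompact_Icc).image (PiLp.continuous_toLp 2 _),
    fun x hx => ⟨WithLp.ofLp x, fun i _ => Ico_subset_Icc_self (hx i), rfl⟩⟩

lemma Continuous.memLp_μT {F : Type*} [NormedAddCommGroup F] {f : E2 → F} (hf : Continuous f)
    (p : ℝ≥0∞) : MemLp f p μT := by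
  obtain ⟨K, hK, hT2K⟩ := exists_isCompact_superset_T2
  obtain ⟨C, hC⟩ := hK.exists_bound_of_continuousOn hf.continuousOn
  refine .of_bound hf.aestronglyMeasurable C ?_
  rw [μT, ae_restrict_iff' measurableSet_T2]
  exact .of_forall fun x hx => hC x (hT2K hx)

lemma Continuous.integrable_μT {F : Type*} [NormedAddCommGroup F] {f : E2 → F}
    (hf : Continuous f) : Integrable f μT :=
  memLp_one_iff_integrable.mp (hf.memLp_μT 1)

section Slices

variable {E F : Type*} [NormedAddCommGroup E] [NormedSpace ℝ E]
  [NormedAddCommGroup F] [NormedSpace ℝ F] {n : WithTop ℕ∞}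

lemma ContDiff.uncurry_left {Θ : ℝ → E → F} (hΘ : ContDiff ℝ n (uncurry Θ)) (t : ℝ) :
    ContDiff ℝ n (Θ t) :=
  hΘ.comp (contDiff_const.prodMk contDiff_id)

lemma hasDerivAt_uncurry_fderiv {Θ : ℝ → E → F} {t : ℝ} {x : E}
    (hΘ : DifferentiableAt ℝ (uncurry Θ) (t, x)) :
    HasDerivAt (Θ · x) (fderiv ℝ (uncurry Θ) (t, x) (1, 0)) t :=
  HasFDerivAt.comp_hasDerivAt (l := uncurry Θ) (f := fun s => (s, x)) t hΘ.hasFDerivAt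
    ((hasDerivAt_id t).prodMk (hasDerivAt_const t x))

lemma continuous_uncurry_deriv {Θ : ℝ → E → F} (hΘ : ContDiff ℝ 1 (uncurry Θ)) :
    Continuous (uncurry fun t x => deriv (Θ · x) t) := by
  have h : (uncurry fun t x => deriv (Θ · x) t) = fun q => fderiv ℝ (uncurry Θ) q (1, 0) := by
    ext ⟨t, x⟩
    exact (hasDerivAt_uncurry_fderiv (hΘ.differentiable one_ne_zero (t, x))).deriv
  rw [h]
  exact (hΘ.continuous_fderiv one_ne_zero).clm_apply continuous_const

end Slices

section PartialDerivatives

variable {g h : E2 → ℝ} {i : Fin 2} {x : E2}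

lemma contDiff_pd {m n : WithTop ℕ∞} (hg : ContDiff ℝ n g) (hmn : m + 1 ≤ n) (i : Fin 2) :
    ContDiff ℝ m (pd g i) :=
  (hg.fderiv_right hmn).clm_apply contDiff_const

lemma continuous_pd (hg : ContDiff ℝ 1 g) (i : Fin 2) : Continuous (pd g i) :=
  (hg.continuous_fderiv one_ne_zero).clm_apply continuous_const

lemma Periodic2.pd (hper : Periodic2 g) (i : Fin 2) : Periodic2 (pd g i) := by
  intro x k
  have hshift : ∀ y, g (y + ivec k) = g y := fun y => hper y k
  rw [_root_.pd, _root_.pd, ← fderiv_comp_add_right]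
  simp only [hshift]

lemma pd_add_const (c : ℝ) : pd (fun y => g y + c) i x = pd g i x := by
  rw [_root_.pd, _root_.pd, fderiv_add_const]

lemma lap_add_const (c : ℝ) : lap (fun y => g y + c) x = lap g x := by
  simp only [lap, pd_add_const]

lemma advect_add_const (u : E2 → E2) (c : ℝ) : advect u (fun y => g y + c) x = advect u g x := by
  simp only [advect, pd_add_const]

lemma pd_mul (hg : DifferentiableAt ℝ g x) (hh : DifferentiableAt ℝ h x) :
    pd (fun y => g y * h y) i x = g x * pd h i x + h x * pd g i x := by
  simp [_root_.pd, fderiv_fun_mul hg hh]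

lemma pd_rpow (hg : DifferentiableAt ℝ g x) (hpos : 0 < g x) (p : ℝ) :
    pd (fun y => g y ^ p) i x = p * g x ^ (p - 1) * pd g i x := by
  rw [_root_.pd, (hg.hasFDerivAt.rpow_const (Or.inl hpos.ne')).fderiv]
  simp [_root_.pd, mul_assoc]

lemma continuous_lap (hg : ContDiff ℝ 2 g) : Continuous (lap g) :=
  continuous_finsetSum _ fun i _ => continuous_pd (contDiff_pd hg le_rfl i) i

lemma ContDiff.component {u : E2 → E2} {n : WithTop ℕ∞} (hu : ContDiff ℝ n u) (i : Fin 2) :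
    ContDiff ℝ n (fun y => u y i) :=
  (EuclideanSpace.proj (𝕜 := ℝ) i).contDiff.comp hu

lemma PeriodicV.component {u : E2 → E2} (hu : PeriodicV u) (i : Fin 2) :
    Periodic2 (fun y => u y i) :=
  fun x k => congrArg (fun v : E2 => v i) (hu x k)

lemma continuous_advect {u : E2 → E2} (hu : Continuous u) (hg : ContDiff ℝ 1 g) :
    Continuous (advect u g) :=
  continuous_finsetSum _ fun i _ =>
    ((EuclideanSpace.proj (𝕜 := ℝ) i).continuous.comp hu).mul (continuous_pd hg i)

lemma continuous_gradVNorm {u : E2 → E2} (hu : ContDiff ℝ 1 u) : Continuous (gradVNorm u) :=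
  continuous_sqrt.comp <| continuous_finsetSum _ fun i _ => continuous_finsetSum _ fun j _ =>
    (continuous_pd (hu.component i) j).pow 2

end PartialDerivatives

section IntegrationByParts

variable {g h : E2 → ℝ}

lemma integral_Ico_pd_line_eq_zero (hg : ContDiff ℝ 1 g) (hper : Periodic2 g) (x : E2)
    (i : Fin 2) : ∫ s in Ico (0:ℝ) 1, pd g i (x + s • EuclideanSpace.single i 1) = 0 := by
  have hderiv : ∀ s : ℝ, HasDerivAt (fun s : ℝ => g (x + s • EuclideanSpace.single i 1))
      (pd g i (x + s • EuclideanSpace.single i 1)) s := fun s =>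
    (hg.differentiable one_ne_zero _).hasFDerivAt.comp_hasDerivAt s
      (((hasDerivAt_id s).smul_const _).const_add x |>.congr_deriv (one_smul ℝ _))
  have hend : x + (1:ℝ) • EuclideanSpace.single i 1
      = x + ivec (fun j => if j = i then 1 else 0) := by
    ext j; simp [ivec, apply_ite (fun n : ℤ => (n : ℝ))]
  have hcont : Continuous fun s : ℝ => pd g i (x + s • EuclideanSpace.single i 1) :=
    (continuous_pd hg i).comp (by fun_prop)
  rw [integral_Ico_eq_integral_Ioo, ← integral_Ioc_eq_integral_Ioo,
    ← intervalIntegral.integral_of_le zero_le_one,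
    intervalIntegral.integral_eq_sub_of_hasDerivAt (fun s _ => hderiv s)
      (hcont.intervalIntegrable 0 1), hend, hper x]
  simp

/-- Fubini in coordinates that split off the `i`-th one: every fibre is a full period of a line. -/
lemma integral_pd_eq_zero (hg : ContDiff ℝ 1 g) (hper : Periodic2 g) (i : Fin 2) :
    ∫ x, pd g i x ∂μT = 0 := by
  set e : E2 ≃ᵐ ℝ × (Fin 1 → ℝ) := (MeasurableEquiv.toLp 2 (Fin 2 → ℝ)).symm.trans
    (MeasurableEquiv.piFinSuccAbove (fun _ => ℝ) i)
  set S : Set (Fin 1 → ℝ) := univ.pi fun _ => Ico 0 1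
  have hpre : e.symm ⁻¹' T2 = Ico 0 1 ×ˢ S := by
    ext ⟨a, y⟩
    simp [e, S, T2, Fin.forall_iff_succAbove i]
  have hmp : MeasurePreserving e.symm
      ((volume.restrict (Ico 0 1)).prod (volume.restrict S)) μT := by
    rw [Measure.prod_restrict, μT, ← hpre]
    exact ((EuclideanSpace.volume_preserving_symm_measurableEquiv_toLp _).trans
      (volume_preserving_piFinSuccAbove _ i)).symm.restrict_preimage_emb
        e.symm.measurableEmbedding T2
  have hline : ∀ a y, e.symm (a, y) = e.symm (0, y) + a • EuclideanSpace.single i 1 := by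
    intro a y
    ext j
    rcases Fin.eq_self_or_eq_succAbove i j with rfl | ⟨k, rfl⟩ <;>
      simp [e]
  have hint := (hmp.integrable_comp_emb e.symm.measurableEmbedding).mpr
    (continuous_pd hg i).integrable_μT
  rw [← hmp.integral_comp' (pd g i), integral_prod_symm (fun z => pd g i (e.symm z)) hint]
  have hfiber : ∀ y, ∫ a in Ico (0:ℝ) 1, pd g i (e.symm (a, y)) = 0 := fun y => by
    simpa only [← hline] using integral_Ico_pd_line_eq_zero hg hper (e.symm (0, y)) i
  simp only [hfiber, integral_zero]

lemma integral_mul_pd_eq_neg (hg : ContDiff ℝ 1 g) (hh : ContDiff ℝ 1 h) (hgper : Periodic2 g)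
    (hhper : Periodic2 h) (i : Fin 2) :
    ∫ x, g x * pd h i x ∂μT = -∫ x, h x * pd g i x ∂μT := by
  have hprod : ∫ x, pd (fun y => g y * h y) i x ∂μT = 0 :=
    integral_pd_eq_zero (hg.mul hh) (fun x k => by simp only [hgper x k, hhper x k]) i
  have hint₁ : Integrable (fun x => g x * pd h i x) μT :=
    (hg.continuous.mul (continuous_pd hh i)).integrable_μT
  have hint₂ : Integrable (fun x => h x * pd g i x) μT :=
    (hh.continuous.mul (continuous_pd hg i)).integrable_μT
  simp only [pd_mul (hg.differentiable one_ne_zero _) (hh.differentiable one_ne_zero _)] at hprod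
  rw [integral_add hint₁ hint₂] at hprod
  linarith

lemma integral_advect_eq_zero {u : E2 → E2} (hu : ContDiff ℝ 1 u) (huper : PeriodicV u)
    (hdiv : ∀ x, divergence u x = 0) (hg : ContDiff ℝ 1 g) (hper : Periodic2 g) :
    ∫ x, advect u g x ∂μT = 0 := by
  have hui : ∀ i, ContDiff ℝ 1 (fun y => u y i) := hu.component
  have hint₁ : ∀ i ∈ Finset.univ, Integrable (fun x => u x i * pd g i x) μT := fun i _ =>
    ((hui i).continuous.mul (continuous_pd hg i)).integrable_μT
  have hint₂ : ∀ i ∈ Finset.univ, Integrable (fun x => g x * pd (fun y => u y i) i x) μT :=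
    fun i _ => (hg.continuous.mul (continuous_pd (hui i) i)).integrable_μT
  calc ∫ x, advect u g x ∂μT
      = ∑ i, ∫ x, u x i * pd g i x ∂μT := integral_finsetSum _ hint₁
    _ = -∫ x, g x * divergence u x ∂μT := by
        simp only [fun i => integral_mul_pd_eq_neg (hui i) hg (huper.component i) hper i,
          divergence, Finset.mul_sum, integral_finsetSum _ hint₂, Finset.sum_neg_distrib]
    _ = 0 := by simp [hdiv]

lemma integral_mul_lap_eq (hg : ContDiff ℝ 1 g) (hh : ContDiff ℝ 2 h) (hgper : Periodic2 g)
    (hhper : Periodic2 h) :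
    ∫ x, g x * lap h x ∂μT = -∫ x, ∑ i, pd g i x * pd h i x ∂μT := by
  have hpdh : ∀ i, ContDiff ℝ 1 (pd h i) := fun i => contDiff_pd hh le_rfl i
  have hint₁ : ∀ i ∈ Finset.univ, Integrable (fun x => g x * pd (pd h i) i x) μT := fun i _ =>
    (hg.continuous.mul (continuous_pd (hpdh i) i)).integrable_μT
  have hint₂ : ∀ i ∈ Finset.univ, Integrable (fun x => pd g i x * pd h i x) μT := fun i _ =>
    ((continuous_pd hg i).mul (hpdh i).continuous).integrable_μT
  simp only [lap, Finset.mul_sum]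
  rw [integral_finsetSum _ hint₁, integral_finsetSum _ hint₂, ← Finset.sum_neg_distrib]
  refine Finset.sum_congr rfl fun i _ => ?_
  rw [integral_mul_pd_eq_neg hg (hpdh i) hgper (hhper.pd i)]
  simp only [mul_comm]

lemma integral_rpow_mul_lap_nonpos (hg : ContDiff ℝ 2 g) (hper : Periodic2 g)
    (hpos : ∀ x, 0 < g x) {p : ℝ} (hp : 1 ≤ p) :
    ∫ x, g x ^ (p - 1) * lap g x ∂μT ≤ 0 := by
  rw [integral_mul_lap_eq ((hg.of_le one_le_two).rpow_const_of_ne fun x => (hpos x).ne') hg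
    (fun x k => by simp only [hper x k]) hper, neg_nonpos]
  refine integral_nonneg fun x => Finset.sum_nonneg fun i _ => ?_
  rw [pd_rpow (hg.differentiable two_ne_zero x) (hpos x), mul_assoc, mul_assoc, ← sq]
  have := hpos x
  positivity

lemma integral_rpow_mul_advect_eq_zero {u : E2 → E2} (hu : ContDiff ℝ 1 u)
    (huper : PeriodicV u) (hdiv : ∀ x, divergence u x = 0) (hg : ContDiff ℝ 1 g)
    (hper : Periodic2 g) (hpos : ∀ x, 0 < g x) {p : ℝ} (hp : p ≠ 0) :
    ∫ x, g x ^ (p - 1) * advect u g x ∂μT = 0 := by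
  have hadv : ∀ x, advect u (fun y => g y ^ p) x = p * (g x ^ (p - 1) * advect u g x) := by
    intro x
    simp only [advect, pd_rpow (hg.differentiable one_ne_zero x) (hpos x), Finset.mul_sum]
    exact Finset.sum_congr rfl fun i _ => by ring
  have := integral_advect_eq_zero hu huper hdiv
    (hg.rpow_const_of_ne (p := p) fun x => (hpos x).ne') (fun x k => by simp only [hper x k])
  simpa only [hadv, integral_const_mul, mul_eq_zero, hp, false_or] using this

end IntegrationByParts

section Inequalities

lemma mul_le_exp_add_mul_log {a b : ℝ} (hb : 0 < b) : a * b ≤ exp a + b * log b := by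
  have h := add_one_le_exp (a - log b)
  rw [exp_sub, exp_log hb, le_div_iff₀ hb] at h
  nlinarith

lemma le_rpow_add_one {x p : ℝ} (hx : 0 ≤ x) (hp : 1 ≤ p) : x ≤ x ^ p + 1 := by
  rcases le_total x 1 with hx1 | hx1
  · linarith [rpow_nonneg hx p]
  · linarith [self_le_rpow_of_one_le hx1 hp]

lemma gronwallBound_add_one_le {N K F t τ p : ℝ} (hN : 0 ≤ N) (hK : 0 < K) (hF : 0 ≤ F)
    (hp : 1 ≤ p) (ht : t ≤ τ) :
    gronwallBound (N + 1) K F t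
      ≤ exp (K * τ) * N ^ p + (2 * exp (K * τ) + F / K * exp (K * τ)) := by
  have hNp := le_rpow_add_one hN hp
  calc gronwallBound (N + 1) K F t ≤ gronwallBound (N + 1) K F τ :=
        gronwallBound_mono (by positivity) hF hK.le ht
    _ = (N + 1) * exp (K * τ) + F / K * (exp (K * τ) - 1) := by
        rw [gronwallBound_of_K_ne_0 hK.ne']
    _ ≤ exp (K * τ) * N ^ p + (2 * exp (K * τ) + F / K * exp (K * τ)) := by
        nlinarith [exp_pos (K * τ), div_nonneg hF hK.le]

/-- With `D = H'` and `(1 / p)' = 1 / β`, the left side is the derivative of `H ^ (1 / p)`;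
the `H log H` terms cancel. -/
lemma rpow_inv_deriv_le {H D p β CK F : ℝ} (hH : 0 < H) (hp : 0 < p)
    (hD : D ≤ p / β * CK * H - p / β * H * log H + p * F * H ^ ((p - 1) / p)) :
    D * p⁻¹ * H ^ (p⁻¹ - 1) + β⁻¹ * H ^ p⁻¹ * log H ≤ CK / β * H ^ p⁻¹ + F := by
  have hscale := mul_le_mul_of_nonneg_right hD (by positivity : 0 ≤ p⁻¹ * H ^ (p⁻¹ - 1))
  have hH₁ : H * H ^ (p⁻¹ - 1) = H ^ p⁻¹ := by
    rw [← rpow_one_add' hH.le (by simp [hp.ne']), add_sub_cancel]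
  have hH₀ : H ^ ((p - 1) / p) * H ^ (p⁻¹ - 1) = 1 := by
    rw [← rpow_add hH, show (p - 1) / p + (p⁻¹ - 1) = 0 by field_simp; ring, Real.rpow_zero]
  have hpp : p * p⁻¹ = 1 := mul_inv_cancel₀ hp.ne'
  have hexpand : (p / β * CK * H - p / β * H * log H + p * F * H ^ ((p - 1) / p))
      * (p⁻¹ * H ^ (p⁻¹ - 1)) = (p * p⁻¹) * (CK / β * (H * H ^ (p⁻¹ - 1))
        - β⁻¹ * log H * (H * H ^ (p⁻¹ - 1)) + F * (H ^ ((p - 1) / p) * H ^ (p⁻¹ - 1))) := by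
    ring
  rw [hH₁, hH₀, hpp] at hexpand
  linear_combination hscale + hexpand

variable {α : Type*} [MeasurableSpace α] {μ : Measure α}

lemma integral_pos_of_forall_pos [NeZero μ] {f : α → ℝ} (hf : ∀ x, 0 < f x)
    (hfi : Integrable f μ) : 0 < ∫ x, f x ∂μ := by
  rw [integral_pos_iff_support_of_nonneg (fun x => (hf x).le) hfi,
    eq_univ_of_forall fun x => mem_support.mpr (hf x).ne']
  exact Measure.measure_univ_pos.mpr (NeZero.ne μ)

lemma integral_le_of_lintegral_ofReal_le {f : α → ℝ} {C : ℝ} (hC : 0 ≤ C)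
    (hf : AEStronglyMeasurable f μ) (hnn : ∀ x, 0 ≤ f x)
    (hle : ∫⁻ x, ENNReal.ofReal (f x) ∂μ ≤ ENNReal.ofReal C) : ∫ x, f x ∂μ ≤ C := by
  rw [integral_eq_lintegral_of_nonneg_ae (.of_forall hnn) hf, ← ENNReal.toReal_ofReal hC]
  exact ENNReal.toReal_mono ENNReal.ofReal_ne_top hle

lemma integral_mul_le_entropy [NeZero μ] {a φ : α → ℝ} {β : ℝ} (hβ : 0 < β)
    (hφ : ∀ x, 0 < φ x) (hφi : Integrable φ μ) (haφ : Integrable (fun x => a x * φ x) μ)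
    (hexp : Integrable (fun x => exp (β * a x)) μ)
    (hφlog : Integrable (fun x => φ x * log (φ x)) μ) :
    ∫ x, a x * φ x ∂μ ≤ ((∫ x, φ x ∂μ) * ∫ x, exp (β * a x) ∂μ
      + ∫ x, φ x * log (φ x) ∂μ - (∫ x, φ x ∂μ) * log (∫ x, φ x ∂μ)) / β := by
  set H := ∫ x, φ x ∂μ
  have hH : 0 < H := integral_pos_of_forall_pos hφ hφi
  have hpt : ∀ x, β * (a x * φ x) ≤ H * exp (β * a x) + φ x * log (φ x) - φ x * log H := by
    intro x
    have h := mul_le_exp_add_mul_log (a := β * a x) (div_pos (hφ x) hH)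
    rw [log_div (hφ x).ne' hH.ne'] at h
    have h' := mul_le_mul_of_nonneg_left h hH.le
    field_simp at h'
    linarith
  have hmono := integral_mono (haφ.const_mul β)
    (((hexp.const_mul H).add hφlog).sub (hφi.mul_const (log H))) hpt
  rw [integral_const_mul, integral_sub' ((hexp.const_mul H).add hφlog) (hφi.mul_const _),
    integral_add' (hexp.const_mul H) hφlog, integral_const_mul, integral_mul_const] at hmono
  rw [le_div_iff₀ hβ]
  linarith

lemma integral_rpow_le_rpow_integral [IsProbabilityMeasure μ] {f : α → ℝ} {s : ℝ}
    (hs₀ : 0 ≤ s) (hs₁ : s ≤ 1) (hf : ∀ x, 0 ≤ f x) (hfi : Integrable f μ)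
    (hfsi : Integrable (fun x => f x ^ s) μ) :
    ∫ x, f x ^ s ∂μ ≤ (∫ x, f x ∂μ) ^ s :=
  (concaveOn_rpow hs₀ hs₁).le_map_integral (continuous_rpow_const hs₀).continuousOn isClosed_Ici
    (ae_of_all _ hf) hfi hfsi

end Inequalities

lemma integral_rpow_sub_one_le {p : ℝ} (hp : 1 ≤ p) {g : E2 → ℝ} (hg : Continuous g)
    (hnn : ∀ x, 0 ≤ g x) : ∫ x, g x ^ (p - 1) ∂μT ≤ (∫ x, g x ^ p ∂μT) ^ ((p - 1) / p) := by
  have hp₀ : 0 < p := by linarith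
  have hpow : ∀ x, (g x ^ p) ^ ((p - 1) / p) = g x ^ (p - 1) := fun x => by
    rw [← rpow_mul (hnn x), mul_div_cancel₀ _ hp₀.ne']
  simpa only [hpow] using integral_rpow_le_rpow_integral (s := (p - 1) / p)
    (div_nonneg (by linarith) hp₀.le)
    (div_le_one_of_le₀ (by linarith) hp₀.le) (fun x => rpow_nonneg (hnn x) p)
    (hg.rpow_const fun x => Or.inr hp₀.le).integrable_μT
    (by simpa only [hpow] using (hg.rpow_const fun x => Or.inr (sub_nonneg.mpr hp)).integrable_μT)

lemma integral_mul_rpow_le_entropy {β CK p : ℝ} (hβ : 0 < β) {a g : E2 → ℝ} (ha : Continuous a)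
    (hg : Continuous g) (hpos : ∀ x, 0 < g x) (hexp : ∫ x, exp (β * a x) ∂μT ≤ CK) :
    ∫ x, a x * g x ^ p ∂μT ≤ ((∫ x, g x ^ p ∂μT) * CK + p * ∫ x, g x ^ p * log (g x) ∂μT
      - (∫ x, g x ^ p ∂μT) * log (∫ x, g x ^ p ∂μT)) / β := by
  have hgp : Continuous fun x => g x ^ p := hg.rpow_const fun x => Or.inl (hpos x).ne'
  have hφpos : ∀ x, 0 < g x ^ p := fun x => rpow_pos_of_pos (hpos x) p
  have hent : ∫ x, g x ^ p * log (g x ^ p) ∂μT = p * ∫ x, g x ^ p * log (g x) ∂μT := by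
    rw [← integral_const_mul]
    exact integral_congr_ae (.of_forall fun x => by simp only [log_rpow (hpos x)]; ring)
  have hCK := mul_le_mul_of_nonneg_left hexp (integral_nonneg (μ := μT) fun x => (hφpos x).le)
  refine (integral_mul_le_entropy hβ hφpos hgp.integrable_μT (ha.mul hgp).integrable_μT
    (continuous_exp.comp (continuous_const.mul ha)).integrable_μT
    (hgp.mul (hgp.log fun x => (hφpos x).ne')).integrable_μT).trans ?_
  rw [hent]
  exact div_le_div_of_nonneg_right (by linarith) hβ.le

/-- The left side is `d/dt ∫ g ^ p(t)` when `∂ₜ g = dg` and `p' = -p² / β`. -/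
lemma integral_rpow_evolution_le {β CK F ν p : ℝ} (hβ : 0 < β) (hF : 0 ≤ F) (hν : 0 ≤ ν)
    (hp : 1 < p) {u : E2 → E2} (hu : ContDiff ℝ 1 u) (huper : PeriodicV u)
    (hdiv : ∀ x, divergence u x = 0) (hexp : ∫ x, exp (β * gradVNorm u x) ∂μT ≤ CK)
    {g dg : E2 → ℝ} (hg : ContDiff ℝ 2 g) (hper : Periodic2 g) (hpos : ∀ x, 0 < g x)
    (hdg : Continuous dg)
    (hsub : ∀ x, dg x ≤ ν * lap g x - advect u g x + gradVNorm u x * g x + F) :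
    ∫ x, (dg x * p * g x ^ (p - 1) + -p ^ 2 / β * g x ^ p * log (g x)) ∂μT
      ≤ p / β * CK * (∫ x, g x ^ p ∂μT) - p / β * (∫ x, g x ^ p ∂μT) * log (∫ x, g x ^ p ∂μT)
        + p * F * (∫ x, g x ^ p ∂μT) ^ ((p - 1) / p) := by
  set a := gradVNorm u
  have hgc := hg.continuous
  have hgp₁ : Continuous fun x => g x ^ (p - 1) := hgc.rpow_const fun x => Or.inl (hpos x).ne'
  have hgp : Continuous fun x => g x ^ p := hgc.rpow_const fun x => Or.inl (hpos x).ne'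
  have hlog : Continuous fun x => log (g x) := hgc.log fun x => (hpos x).ne'
  have ha : Continuous a := continuous_gradVNorm hu
  have iLap : Integrable (fun x => g x ^ (p - 1) * lap g x) μT :=
    (hgp₁.mul (continuous_lap hg)).integrable_μT
  have iAdv : Integrable (fun x => g x ^ (p - 1) * advect u g x) μT :=
    (hgp₁.mul (continuous_advect hu.continuous (hg.of_le one_le_two))).integrable_μT
  have iOne : Integrable (fun x => g x ^ (p - 1)) μT := hgp₁.integrable_μT
  have iAmp : Integrable (fun x => a x * g x ^ p) μT := (ha.mul hgp).integrable_μT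
  have iLog : Integrable (fun x => g x ^ p * log (g x)) μT := (hgp.mul hlog).integrable_μT
  have hpt : ∀ x, dg x * p * g x ^ (p - 1) + -p ^ 2 / β * g x ^ p * log (g x)
      ≤ p * ν * (g x ^ (p - 1) * lap g x) - p * (g x ^ (p - 1) * advect u g x)
        + p * F * g x ^ (p - 1) + p * (a x * g x ^ p) + -p ^ 2 / β * (g x ^ p * log (g x)) := by
    intro x
    have hgg : g x ^ (p - 1) * g x = g x ^ p := by
      rw [← rpow_add_one (hpos x).ne', sub_add_cancel]
    have := mul_le_mul_of_nonneg_left (hsub x)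
      (mul_nonneg (by linarith : (0:ℝ) ≤ p) (rpow_nonneg (hpos x).le (p - 1)))
    linear_combination this + p * a x * hgg
  have hsplit := integral_mono (Continuous.integrable_μT (by fun_prop)) (by fun_prop) hpt
  conv at hsplit =>
    rhs
    rw [integral_add (by fun_prop) (by fun_prop), integral_add (by fun_prop) (by fun_prop),
      integral_add (by fun_prop) (by fun_prop), integral_sub (by fun_prop) (by fun_prop)]
    simp only [integral_const_mul]
  rw [integral_rpow_mul_advect_eq_zero hu huper hdiv (hg.of_le one_le_two) hper hpos
    (by positivity)] at hsplit
  have hlap : p * ν * ∫ x, g x ^ (p - 1) * lap g x ∂μT ≤ 0 :=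
    mul_nonpos_of_nonneg_of_nonpos (by positivity)
      (integral_rpow_mul_lap_nonpos hg hper hpos hp.le)
  have hforce : p * F * ∫ x, g x ^ (p - 1) ∂μT ≤ p * F * (∫ x, g x ^ p ∂μT) ^ ((p - 1) / p) :=
    mul_le_mul_of_nonneg_left (integral_rpow_sub_one_le hp.le hgc fun x => (hpos x).le)
      (by positivity)
  have hamp := mul_le_mul_of_nonneg_left (integral_mul_rpow_le_entropy (p := p) hβ ha hgc hpos hexp)
    (by positivity : 0 ≤ p)
  have hexpand : p * (((∫ x, g x ^ p ∂μT) * CK + p * ∫ x, g x ^ p * log (g x) ∂μT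
      - (∫ x, g x ^ p ∂μT) * log (∫ x, g x ^ p ∂μT)) / β)
      = p / β * CK * (∫ x, g x ^ p ∂μT) - p / β * (∫ x, g x ^ p ∂μT) * log (∫ x, g x ^ p ∂μT)
        + p ^ 2 / β * ∫ x, g x ^ p * log (g x) ∂μT := by ring
  linear_combination hsplit + hlap + hforce + hamp + hexpand

lemma hasDerivAt_integral_μT {Φ Φ' : ℝ → E2 → ℝ} {t₀ r : ℝ} (hr : 0 < r)
    (hΦ : ∀ t ∈ ball t₀ r, Continuous (Φ t))
    (hΦ' : ContinuousOn (uncurry Φ') (closedBall t₀ r ×ˢ univ))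
    (hderiv : ∀ t ∈ ball t₀ r, ∀ x, HasDerivAt (Φ · x) (Φ' t x) t) :
    HasDerivAt (fun t => ∫ x, Φ t x ∂μT) (∫ x, Φ' t₀ x ∂μT) t₀ := by
  obtain ⟨K, hK, hT2K⟩ := exists_isCompact_superset_T2
  obtain ⟨C, hC⟩ := (isCompact_closedBall t₀ r).prod hK |>.exists_bound_of_continuousOn
    (hΦ'.mono (prod_mono_right (subset_univ K)))
  have hΦ't₀ : Continuous (Φ' t₀) :=
    hΦ'.comp_continuous (continuous_const.prodMk continuous_id)
      fun x => ⟨mem_closedBall_self hr.le, mem_univ x⟩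
  refine (hasDerivAt_integral_of_dominated_loc_of_deriv_le (bound := fun _ => C)
    (ball_mem_nhds t₀ hr) ?_ (hΦ t₀ (mem_ball_self hr)).integrable_μT
    hΦ't₀.aestronglyMeasurable ?_ (integrable_const C) (.of_forall fun x t ht => hderiv t ht x)).2
  · exact eventually_of_mem (ball_mem_nhds t₀ hr) fun t ht => (hΦ t ht).aestronglyMeasurable
  · rw [μT, ae_restrict_iff' measurableSet_T2]
    exact .of_forall fun x hx t ht => hC (t, x) ⟨ball_subset_closedBall ht, hT2K hx⟩

lemma hasDerivAt_integral_rpow {θ : ℝ → E2 → ℝ} (hθ : ContDiff ℝ 1 (uncurry θ))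
    {ε : ℝ} (hpos : ∀ t x, 0 < θ t x + ε) {P P' : ℝ → ℝ} {t₀ r : ℝ} (hr : 0 < r)
    (hP : ∀ t ∈ closedBall t₀ r, HasDerivAt P (P' t) t)
    (hP' : ContinuousOn P' (closedBall t₀ r)) :
    HasDerivAt (fun t => ∫ x, (θ t x + ε) ^ P t ∂μT)
      (∫ x, (deriv (θ · x) t₀ * P t₀ * (θ t₀ x + ε) ^ (P t₀ - 1)
        + P' t₀ * (θ t₀ x + ε) ^ P t₀ * log (θ t₀ x + ε)) ∂μT) t₀ := by
  have hPc : ContinuousOn P (closedBall t₀ r) := fun t ht =>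
    (hP t ht).continuousAt.continuousWithinAt
  have hθc : Continuous (uncurry fun t x => θ t x + ε) := hθ.continuous.add continuous_const
  have hθ' := continuous_uncurry_deriv hθ
  have hne : ∀ q : ℝ × E2, θ q.1 q.2 + ε ≠ 0 := fun q => (hpos q.1 q.2).ne'
  refine hasDerivAt_integral_μT (Φ := fun t x => (θ t x + ε) ^ P t)
    (Φ' := fun t x => deriv (θ · x) t * P t * (θ t x + ε) ^ (P t - 1)
      + P' t * (θ t x + ε) ^ P t * log (θ t x + ε)) hr (fun t _ => ?_) ?_ fun t ht x => ?_
  · exact (hθc.uncurry_left t).rpow_const fun x => Or.inl (hpos t x).ne'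
  · have hPfst : ContinuousOn (fun q : ℝ × E2 => P q.1) (closedBall t₀ r ×ˢ univ) :=
      hPc.comp continuous_fst.continuousOn fun q hq => hq.1
    have hP'fst : ContinuousOn (fun q : ℝ × E2 => P' q.1) (closedBall t₀ r ×ˢ univ) :=
      hP'.comp continuous_fst.continuousOn fun q hq => hq.1
    exact ((hθ'.continuousOn.mul hPfst).mul
      (hθc.continuousOn.rpow (hPfst.sub continuousOn_const) fun q _ => Or.inl (hne q))).add
      ((hP'fst.mul (hθc.continuousOn.rpow hPfst fun q _ => Or.inl (hne q))).mul
        (hθc.log hne).continuousOn)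
  · exact ((hasDerivAt_uncurry_fderiv (hθ.differentiable one_ne_zero (t, x))).differentiableAt
      |>.hasDerivAt.add_const ε).rpow (hP t (ball_subset_closedBall ht)) (hpos t x)

def realLpNorm (f : E2 → ℝ) (p : ℝ) : ℝ := (∫ x, f x ^ p ∂μT) ^ p⁻¹

lemma eLpNorm_eq_ofReal_realLpNorm {f : E2 → ℝ} (hf : Continuous f) (hnn : ∀ x, 0 ≤ f x)
    {p : ℝ} (hp : 0 < p) : eLpNorm f (ENNReal.ofReal p) μT = ENNReal.ofReal (realLpNorm f p) := by
  rw [(hf.memLp_μT _).eLpNorm_eq_integral_rpow_norm (by simpa using hp) ENNReal.ofReal_ne_top,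
    ENNReal.toReal_ofReal hp.le, realLpNorm]
  simp only [Real.norm_of_nonneg (hnn _)]

structure IsTransportSubsolution (β CK F ν τ : ℝ) (u : ℝ → E2 → E2) (θ : ℝ → E2 → ℝ) :
    Prop where
  smooth_u : ∀ t, ContDiff ℝ 1 (u t)
  periodic_u : ∀ t, PeriodicV (u t)
  divFree : ∀ t ∈ Icc 0 τ, ∀ x, divergence (u t) x = 0
  integral_exp_le : ∀ t ∈ Icc 0 τ, ∫ x, exp (β * gradVNorm (u t) x) ∂μT ≤ CK
  smooth_θ : ContDiff ℝ 2 (uncurry θ)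
  periodic_θ : ∀ t, Periodic2 (θ t)
  nonneg : ∀ t x, 0 ≤ θ t x
  subsolution : ∀ t ∈ Icc 0 τ, ∀ x,
    deriv (θ · x) t ≤ ν * lap (θ t) x - advect (u t) (θ t) x + gradVNorm (u t) x * θ t x + F

namespace IsTransportSubsolution

variable {β CK F ν τ ε q₀ : ℝ} {u : ℝ → E2 → E2} {θ : ℝ → E2 → ℝ}

lemma integral_rpow_deriv_le (h : IsTransportSubsolution β CK F ν τ u θ) (hβ : 0 < β)
    (hF : 0 ≤ F) (hν : 0 ≤ ν) (hε : 0 < ε) {p : ℝ} (hp : 1 < p) {t : ℝ} (ht : t ∈ Icc 0 τ) :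
    ∫ x, (deriv (θ · x) t * p * (θ t x + ε) ^ (p - 1)
        + -p ^ 2 / β * (θ t x + ε) ^ p * log (θ t x + ε)) ∂μT
      ≤ p / β * CK * (∫ x, (θ t x + ε) ^ p ∂μT)
        - p / β * (∫ x, (θ t x + ε) ^ p ∂μT) * log (∫ x, (θ t x + ε) ^ p ∂μT)
        + p * F * (∫ x, (θ t x + ε) ^ p ∂μT) ^ ((p - 1) / p) := by
  refine integral_rpow_evolution_le hβ hF hν hp (h.smooth_u t) (h.periodic_u t) (h.divFree t ht)
    (h.integral_exp_le t ht) ((h.smooth_θ.uncurry_left t).add contDiff_const)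
    (fun x k => by simp only [h.periodic_θ t x k]) (fun x => by linarith [h.nonneg t x])
    ((continuous_uncurry_deriv (h.smooth_θ.of_le one_le_two)).uncurry_left t) fun x => ?_
  show deriv (θ · x) t ≤ ν * lap (fun y => θ t y + ε) x - advect (u t) (fun y => θ t y + ε) x
    + gradVNorm (u t) x * (θ t x + ε) + F
  rw [lap_add_const, advect_add_const]
  have hsub := h.subsolution t ht x
  have hamp : 0 ≤ gradVNorm (u t) x * ε := mul_nonneg (sqrt_nonneg _) hε.le
  linarith

lemma exists_hasDerivAt_realLpNorm_le (h : IsTransportSubsolution β CK F ν τ u θ) (hβ : 0 < β)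
    (hF : 0 ≤ F) (hν : 0 ≤ ν) (hε : 0 < ε) (hq₀ : 0 < q₀) (hτ : q₀ + τ / β ≤ 1 / 2) {s : ℝ}
    (hs : s ∈ Icc 0 τ) :
    ∃ D, HasDerivAt (fun t => realLpNorm (fun x => θ t x + ε) (q₀ + t / β)⁻¹) D s ∧
      D ≤ CK / β * realLpNorm (fun x => θ s x + ε) (q₀ + s / β)⁻¹ + F := by
  set Q : ℝ → ℝ := fun t => q₀ + t / β
  set P : ℝ → ℝ := fun t => (Q t)⁻¹
  have hQ' : ∀ t, HasDerivAt Q β⁻¹ t := fun t => by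
    simpa only [one_div] using ((hasDerivAt_id' t).div_const β).const_add q₀
  have hP' : ∀ t, 0 < Q t → HasDerivAt P (-P t ^ 2 / β) t := fun t ht => by
    have hinv := (hQ' t).inv ht.ne'
    rwa [show -β⁻¹ / Q t ^ 2 = -P t ^ 2 / β by simp only [P]; field_simp] at hinv
  have hQs : q₀ ≤ Q s ∧ Q s ≤ 1 / 2 := by
    have : s / β ≤ τ / β := div_le_div_of_nonneg_right hs.2 hβ.le
    exact ⟨le_add_of_nonneg_right (div_nonneg hs.1 hβ.le), by linarith⟩
  have hPs : 2 ≤ P s := by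
    simpa using (inv_anti₀ (by linarith) hQs.2 : (1 / 2 : ℝ)⁻¹ ≤ P s)
  have hpos : ∀ t x, 0 < θ t x + ε := fun t x => by linarith [h.nonneg t x]
  set r := q₀ * β / 2 with hr_def
  have hr : 0 < r := by positivity
  have hQball : ∀ t ∈ closedBall s r, 0 < Q t := fun t ht => by
    have h1 : s - r ≤ t := by linarith [(abs_le.mp (mem_closedBall.mp ht)).1]
    have h2 : -(q₀ / 2) ≤ t / β := by
      rw [le_div_iff₀ hβ]; linarith [hs.1]
    simp only [Q]; linarith
  have hH := hasDerivAt_integral_rpow (h.smooth_θ.of_le one_le_two) hpos hr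
    (fun t ht => hP' t (hQball t ht))
    (((continuousOn_const.add (continuousOn_id.div_const β)).inv₀ fun t ht =>
      (hQball t ht).ne').pow 2 |>.neg.div_const β)
  have hHpos : 0 < ∫ x, (θ s x + ε) ^ P s ∂μT :=
    integral_pos_of_forall_pos (fun x => rpow_pos_of_pos (hpos s x) _)
      (((h.smooth_θ.continuous.uncurry_left s).add continuous_const).rpow_const fun x =>
        Or.inl (hpos s x).ne').integrable_μT
  have hQeq : (fun t => (P t)⁻¹) = Q := funext fun t => inv_inv _
  refine ⟨_, hH.rpow (hQeq ▸ hQ' s) hHpos, ?_⟩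
  exact rpow_inv_deriv_le hHpos (by linarith)
    (h.integral_rpow_deriv_le hβ hF hν hε (by linarith) hs)

lemma realLpNorm_le_gronwallBound (h : IsTransportSubsolution β CK F ν τ u θ) (hβ : 0 < β)
    (hF : 0 ≤ F) (hν : 0 ≤ ν) (hε : 0 < ε) (hq₀ : 0 < q₀) (hτ : q₀ + τ / β ≤ 1 / 2) {δ : ℝ}
    (hδ : realLpNorm (fun x => θ 0 x + ε) q₀⁻¹ ≤ δ) {t : ℝ} (ht : t ∈ Icc 0 τ) :
    realLpNorm (fun x => θ t x + ε) (q₀ + t / β)⁻¹ ≤ gronwallBound δ (CK / β) F t := by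
  choose! D hD hDle using fun s (hs : s ∈ Icc 0 τ) =>
    h.exists_hasDerivAt_realLpNorm_le hβ hF hν hε hq₀ hτ hs
  simpa using le_gronwallBound_of_liminf_deriv_right_le
    (fun s hs => (hD s hs).continuousAt.continuousWithinAt)
    (fun s hs r hr => (hD s (Ico_subset_Icc_self hs)).hasDerivWithinAt.liminf_right_slope_le hr)
    (by simpa using hδ) (fun s hs => hDle s (Ico_subset_Icc_self hs)) t ht

lemma eLpNorm_two_le_gronwallBound (h : IsTransportSubsolution β CK F ν τ u θ) (hβ : 0 < β)
    (hF : 0 ≤ F) (hν : 0 ≤ ν) (hε : 0 < ε) (hq₀ : 0 < q₀) (hτ : q₀ + τ / β ≤ 1 / 2) {t : ℝ}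
    (ht : t ∈ Icc 0 τ) :
    eLpNorm (θ t) 2 μT ≤ ENNReal.ofReal (gronwallBound
      ((eLpNorm (θ 0) (ENNReal.ofReal q₀⁻¹) μT).toReal + ε) (CK / β) F t) := by
  have hθc : ∀ s, Continuous (θ s) := h.smooth_θ.continuous.uncurry_left
  have hpos : ∀ s x, 0 ≤ θ s x + ε := fun s x => by linarith [h.nonneg s x]
  have hQ : q₀ ≤ q₀ + t / β ∧ q₀ + t / β ≤ 1 / 2 := by
    have : t / β ≤ τ / β := div_le_div_of_nonneg_right ht.2 hβ.le
    exact ⟨le_add_of_nonneg_right (div_nonneg ht.1 hβ.le), by linarith⟩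
  have hq₀' : 2 ≤ q₀⁻¹ := by simpa using inv_anti₀ hq₀ (hQ.1.trans hQ.2)
  have hPt : 2 ≤ (q₀ + t / β)⁻¹ := by simpa using inv_anti₀ (by linarith) hQ.2
  have hθ0 : eLpNorm (θ 0) (ENNReal.ofReal q₀⁻¹) μT ≠ ⊤ := ((hθc 0).memLp_μT _).eLpNorm_ne_top
  have hδ : realLpNorm (fun x => θ 0 x + ε) q₀⁻¹
      ≤ (eLpNorm (θ 0) (ENNReal.ofReal q₀⁻¹) μT).toReal + ε := by
    have htri := eLpNorm_add_le (μ := μT) (p := ENNReal.ofReal q₀⁻¹) (hθc 0).aestronglyMeasurable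
      (aestronglyMeasurable_const (b := ε)) (ENNReal.one_le_ofReal.mpr (by linarith))
    rw [show θ 0 + (fun _ => ε) = fun x => θ 0 x + ε from rfl,
      eLpNorm_eq_ofReal_realLpNorm (f := fun x => θ 0 x + ε) ((hθc 0).add continuous_const)
        (hpos 0) (by positivity),
      eLpNorm_const _ (by simpa using hq₀) (NeZero.ne μT), measure_univ, ENNReal.one_rpow,
      mul_one, ← ENNReal.ofReal_toReal hθ0, Real.enorm_of_nonneg hε.le,
      ← ENNReal.ofReal_add ENNReal.toReal_nonneg hε.le] at htri
    exact (ENNReal.ofReal_le_ofReal_iff (by positivity)).mp htri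
  calc eLpNorm (θ t) 2 μT ≤ eLpNorm (fun x => θ t x + ε) 2 μT :=
        eLpNorm_mono fun x => by
          simp only [Real.norm_of_nonneg (h.nonneg t x), Real.norm_of_nonneg (hpos t x)]
          linarith
    _ ≤ eLpNorm (fun x => θ t x + ε) (ENNReal.ofReal (q₀ + t / β)⁻¹) μT :=
        eLpNorm_le_eLpNorm_of_exponent_le (by simpa using ENNReal.ofReal_le_ofReal hPt)
          ((hθc t).add continuous_const).aestronglyMeasurable
    _ = ENNReal.ofReal (realLpNorm (fun x => θ t x + ε) (q₀ + t / β)⁻¹) :=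
        eLpNorm_eq_ofReal_realLpNorm (f := fun x => θ t x + ε) ((hθc t).add continuous_const)
          (hpos t) (by linarith)
    _ ≤ _ := ENNReal.ofReal_le_ofReal (h.realLpNorm_le_gronwallBound hβ hF hν hε hq₀ hτ hδ ht)

end IsTransportSubsolution

/-- **Lemma 2.3** of the paper: a nonnegative scalar `θ` transported (and diffused, `ν ≥ 0`)
and amplified by a divergence-free velocity `u` with exponentially integrable gradient,
`∂ₜθ + u·∇θ − νΔθ ≤ |∇u|θ + f`, satisfies
`sup_{t ∈ [0,t*]} ‖θ(t)‖_{L²} ≤ C₁‖θ(0)‖_{L^{2p₀}}^{p₀} + C₂` with `t* = β(p₀−1)/(2p₀)`,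
where `C₁, C₂` depend only on `p₀, β, C_K, F` (in particular they are uniform in `ν`). -/
theorem transport_short_time_H1_loss
    (β CK p₀ F : ℝ) (hβ : 0 < β) (hCK : 0 < CK) (hp₀ : 1 < p₀) (hF : 0 ≤ F) :
    ∃ C₁ C₂ : ℝ, 0 ≤ C₁ ∧ 0 ≤ C₂ ∧
      ∀ (ν : ℝ), 0 ≤ ν →
      ∀ (T : ℝ), β * (p₀ - 1) / (2 * p₀) ≤ T →
      ∀ (u : ℝ → E2 → E2),
        ContDiff ℝ (⊤ : ℕ∞) (fun q : ℝ × E2 => u q.1 q.2) →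
        (∀ t, PeriodicV (u t)) →
        (∀ t ∈ Set.Icc 0 T, ∀ x, divergence (u t) x = 0) →
        (∀ t ∈ Set.Icc 0 T,
          ∫⁻ x, ENNReal.ofReal (Real.exp (β * gradVNorm (u t) x)) ∂μT
            ≤ ENNReal.ofReal CK) →
      ∀ (f : ℝ → E2 → ℝ),
        Measurable (fun q : ℝ × E2 => f q.1 q.2) →
        (∀ t ∈ Set.Icc 0 T, ∀ x, |f t x| ≤ F) →
      ∀ (θ : ℝ → E2 → ℝ),
        ContDiff ℝ (⊤ : ℕ∞) (fun q : ℝ × E2 => θ q.1 q.2) →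
        (∀ t, Periodic2 (θ t)) →
        (∀ t x, 0 ≤ θ t x) →
        (∀ t ∈ Set.Icc 0 T, ∀ x : E2,
          deriv (fun s => θ s x) t + advect (u t) (θ t) x - ν * lap (θ t) x
            ≤ gradVNorm (u t) x * θ t x + f t x) →
        (⨆ t ∈ Set.Icc (0:ℝ) (β * (p₀ - 1) / (2 * p₀)), eLpNorm (θ t) 2 μT)
          ≤ ENNReal.ofReal
              (C₁ * ((eLpNorm (θ 0) (ENNReal.ofReal (2 * p₀)) μT).toReal) ^ p₀ + C₂) := by
  set τ := β * (p₀ - 1) / (2 * p₀) with hτ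
  set K := CK / β
  have hK : 0 < K := by positivity
  refine ⟨exp (K * τ), 2 * exp (K * τ) + F / K * exp (K * τ), (exp_pos _).le, by positivity, ?_⟩
  intro ν hν T hT u hu huper hdiv hexp f _ hfbd θ hθ hθper hθnn hsub
  have hτT : Icc 0 τ ⊆ Icc 0 T := Icc_subset_Icc_right hT
  have hu₁ : ∀ t, ContDiff ℝ 1 (u t) := fun t => (hu.uncurry_left t).of_le ENat.LEInfty.out
  have hsol : IsTransportSubsolution β CK F ν τ u θ :=
    { smooth_u := hu₁
      periodic_u := huper
      divFree := fun t ht => hdiv t (hτT ht)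
      integral_exp_le := fun t ht => integral_le_of_lintegral_ofReal_le hCK.le
        (continuous_exp.comp
          (continuous_const.mul (continuous_gradVNorm (hu₁ t)))).aestronglyMeasurable
        (fun x => (exp_pos _).le) (hexp t (hτT ht))
      smooth_θ := hθ.of_le ENat.LEInfty.out
      periodic_θ := hθper
      nonneg := hθnn
      subsolution := fun t ht x => by
        linarith [hsub t (hτT ht) x, (abs_le.mp (hfbd t (hτT ht) x)).2] }
  have hτq : (2 * p₀)⁻¹ + τ / β ≤ 1 / 2 := le_of_eq (by rw [hτ]; field_simp; ring)
  refine iSup₂_le fun t ht => ?_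
  -- No limit `ε → 0` is needed: the shift `ε = 1` only enlarges `C₂`.
  have hbound := hsol.eLpNorm_two_le_gronwallBound hβ hF hν one_pos (by positivity) hτq ht
  rw [inv_inv] at hbound
  exact hbound.trans (ENNReal.ofReal_le_ofReal
    (gronwallBound_add_one_le ENNReal.toReal_nonneg hK hF hp₀.le ht.2))

end
end

section
/- Let ν̃ ≥ 0 and let (δ_n)_{n≥0} be a sequence of nonnegative real numbers satisfying δ_n ≤ √(δ_{n−1}) + ν̃ for every n ≥ 1. Then for every n ≥ 1, δ_n ≤ δ₀^{2^{−n}} + ∑_{i=0}^{n−1} ν̃^{2^{−i}}. -/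
/-! Taking the square root of the bound for `δ n` halves every exponent `2^{-i}`, subadditivity of
`√` distributes it over the sum, and the new `ν` is the summand `i = 0` after the index shift. -/

namespace Real

lemma le_sq_sqrt (x : ℝ) : x ≤ √x ^ 2 := by
  rcases le_total 0 x with hx | hx
  · rw [sq_sqrt hx]
  · exact hx.trans (sq_nonneg _)

lemma sqrt_add_le_add_sqrt (x y : ℝ) : √(x + y) ≤ √x + √y := by
  rw [sqrt_le_left (by positivity)]
  nlinarith [le_sq_sqrt x, le_sq_sqrt y, sqrt_nonneg x, sqrt_nonneg y]

lemma sqrt_sum_le_sum_sqrt {ι : Type*} (s : Finset ι) (f : ι → ℝ) :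
    √(∑ i ∈ s, f i) ≤ ∑ i ∈ s, √(f i) :=
  Finset.le_sum_of_subadditive sqrt sqrt_zero.le sqrt_add_le_add_sqrt s f

lemma sqrt_rpow_two_pow_neg {x : ℝ} (hx : 0 ≤ x) (n : ℕ) :
    √(x ^ (2 : ℝ) ^ (-(n : ℝ))) = x ^ (2 : ℝ) ^ (-((n + 1 : ℕ) : ℝ)) := by
  rw [sqrt_eq_rpow, ← rpow_mul hx]
  congr 1
  push_cast
  rw [neg_add, rpow_add two_pos, rpow_neg_one, one_div]

end Real

open Real Finset in
theorem le_rpow_two_pow_neg_add_sum_of_le_sqrt_add {ν : ℝ} (hν : 0 ≤ ν) {δ : ℕ → ℝ}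
    (hδ₀ : 0 ≤ δ 0) (h : ∀ n, δ (n + 1) ≤ √(δ n) + ν) (n : ℕ) :
    δ n ≤ δ 0 ^ (2 : ℝ) ^ (-(n : ℝ)) + ∑ i ∈ range n, ν ^ (2 : ℝ) ^ (-(i : ℝ)) := by
  induction n with
  | zero => simp
  | succ n ih =>
    calc δ (n + 1) ≤ √(δ n) + ν := h n
      _ ≤ √(δ 0 ^ (2 : ℝ) ^ (-(n : ℝ)) + ∑ i ∈ range n, ν ^ (2 : ℝ) ^ (-(i : ℝ))) + ν := by
          gcongr
      _ ≤ √(δ 0 ^ (2 : ℝ) ^ (-(n : ℝ))) + ∑ i ∈ range n, √(ν ^ (2 : ℝ) ^ (-(i : ℝ))) + ν := by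
          grw [sqrt_add_le_add_sqrt, sqrt_sum_le_sum_sqrt]
      _ = _ := by
          simp only [sqrt_rpow_two_pow_neg hδ₀, sqrt_rpow_two_pow_neg hν, sum_range_succ' _ n]
          simp [add_assoc]

/-- The iteration bound (2.49)–(2.51) in Step 2 of Lemma 2.5 of the paper: if
`δ_n ≤ √(δ_{n−1}) + ν̃` for all `n ≥ 1`, then
`δ_n ≤ δ₀^{2^{−n}} + ∑_{i=0}^{n−1} ν̃^{2^{−i}}` for all `n ≥ 1`. -/
theorem iterate_sqrt_bound (ν : ℝ) (hν : 0 ≤ ν) (δ : ℕ → ℝ) (hδ : ∀ n, 0 ≤ δ n)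
    (h : ∀ n : ℕ, 1 ≤ n → δ n ≤ Real.sqrt (δ (n - 1)) + ν) :
    ∀ n : ℕ, 1 ≤ n →
      δ n ≤ δ 0 ^ ((2:ℝ) ^ (-(n:ℝ))) + ∑ i ∈ Finset.range n, ν ^ ((2:ℝ) ^ (-(i:ℝ))) :=
  fun n _ => le_rpow_two_pow_neg_add_sum_of_le_sqrt_add hν (hδ 0)
    (fun k => by simpa using h (k + 1) k.succ_pos) n
end

section
/- Let β > 0, C > 0, A > 0, T > 0, and let ρ : [0,T] → ℝ be differentiable with 0 < ρ(t) and ρ(t)² ≤ A for all t ∈ [0,T], satisfying the differential inequality ρ'(t) ≤ (C/β) ρ(t) log(A/ρ(t)²) for all t ∈ [0,T]. Then for all t ∈ [0,T], ρ(t) ≤ A^{(1 − e^{−2Ct/β})/2} · ρ(0)^{e^{−2Ct/β}}. -/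
/-!
Write `u = log (A / ρ²) = log A - 2 log ρ`. The differential inequality says exactly that
`u' ≥ -(2C/β) u`, so by Grönwall `u t ≥ e^{-2Ct/β} u 0`; exponentiating this lower bound
on `log (A / ρ t²)` is the claimed upper bound on `ρ t`.
-/

open Real Set

theorem mul_exp_le_of_hasDerivAt_of_le {u u' : ℝ → ℝ} {k a b : ℝ}
    (hu : ∀ s ∈ Icc a b, HasDerivAt u (u' s) s) (h : ∀ s ∈ Icc a b, k * u s ≤ u' s) :
    ∀ t ∈ Icc a b, u a * exp (k * (t - a)) ≤ u t := by
  have hcont : ContinuousOn (fun s => -u s) (Icc a b) :=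
    fun s hs => (hu s hs).continuousAt.continuousWithinAt.neg
  have hslope : ∀ s ∈ Ico a b, ∀ r, -u' s < r →
      ∃ᶠ z in nhdsWithin s (Ioi s), (z - s)⁻¹ * (-u z - -u s) < r :=
    fun s hs _ hr =>
      ((hu s (Ico_subset_Icc_self hs)).neg.hasDerivWithinAt).liminf_right_slope_le hr
  have hbound : ∀ s ∈ Ico a b, -u' s ≤ k * -u s + 0 := fun s hs => by
    linarith [h s (Ico_subset_Icc_self hs)]
  intro t ht
  have hgronwall := le_gronwallBound_of_liminf_deriv_right_le hcont hslope le_rfl hbound t ht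
  rw [gronwallBound_ε0] at hgronwall
  linarith

theorem le_rpow_mul_rpow_of_log_le {x a b p q : ℝ} (hx : 0 < x) (ha : 0 < a) (hb : 0 < b)
    (h : log x ≤ p * log a + q * log b) : x ≤ a ^ p * b ^ q := by
  rwa [← log_le_log_iff hx (by positivity), log_mul (by positivity) (by positivity),
    log_rpow ha, log_rpow hb]

theorem osgood_log_comparison_general
    (β C A T : ℝ) (hA : 0 < A)
    (ρ ρ' : ℝ → ℝ)
    (hderiv : ∀ t ∈ Set.Icc 0 T, HasDerivAt ρ (ρ' t) t)
    (hpos : ∀ t ∈ Set.Icc 0 T, 0 < ρ t)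
    (hode : ∀ t ∈ Set.Icc 0 T, ρ' t ≤ (C / β) * ρ t * Real.log (A / ρ t ^ 2)) :
    ∀ t ∈ Set.Icc 0 T,
      ρ t ≤ A ^ ((1 - Real.exp (-(2 * C * t / β))) / 2)
              * ρ 0 ^ (Real.exp (-(2 * C * t / β))) := by
  intro t ht
  set u : ℝ → ℝ := fun s => log A - 2 * log (ρ s)
  have hu_deriv : ∀ s ∈ Icc 0 T, HasDerivAt u (-2 * (ρ' s / ρ s)) s := fun s hs => by
    simpa using ((hderiv s hs).log (hpos s hs).ne').const_mul 2 |>.const_sub (log A)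
  have hu_ode : ∀ s ∈ Icc 0 T, -(2 * C / β) * u s ≤ -2 * (ρ' s / ρ s) := fun s hs => by
    have hode_s := hode s hs
    rw [log_div hA.ne' (pow_ne_zero 2 (hpos s hs).ne'), log_pow, Nat.cast_ofNat] at hode_s
    have : ρ' s / ρ s ≤ C / β * u s := by
      rw [div_le_iff₀ (hpos s hs)]
      linear_combination hode_s
    linear_combination 2 * this
  have key := mul_exp_le_of_hasDerivAt_of_le hu_deriv hu_ode t ht
  rw [show -(2 * C / β) * (t - 0) = -(2 * C * t / β) by ring] at key
  exact le_rpow_mul_rpow_of_log_le (hpos t ht) hA (hpos 0 ⟨le_rfl, ht.1.trans ht.2⟩)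
    (by linarith)

/-- The Osgood-type comparison lemma behind the trajectory-separation estimate (2.33)
in Proposition 2.7 of the paper: if `0 < ρ(t)`, `ρ(t)² ≤ A` and
`ρ'(t) ≤ (C/β) ρ(t) log(A/ρ(t)²)` on `[0,T]`, then
`ρ(t) ≤ A^{(1−e^{−2Ct/β})/2} ρ(0)^{e^{−2Ct/β}}`. -/
theorem osgood_log_comparison
    (β C A T : ℝ) (hβ : 0 < β) (hC : 0 < C) (hA : 0 < A) (hT : 0 < T)
    (ρ ρ' : ℝ → ℝ)
    (hderiv : ∀ t ∈ Set.Icc 0 T, HasDerivAt ρ (ρ' t) t)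
    (hpos : ∀ t ∈ Set.Icc 0 T, 0 < ρ t)
    (hbd : ∀ t ∈ Set.Icc 0 T, ρ t ^ 2 ≤ A)
    (hode : ∀ t ∈ Set.Icc 0 T, ρ' t ≤ (C / β) * ρ t * Real.log (A / ρ t ^ 2)) :
    ∀ t ∈ Set.Icc 0 T,
      ρ t ≤ A ^ ((1 - Real.exp (-(2 * C * t / β))) / 2)
              * ρ 0 ^ (Real.exp (-(2 * C * t / β))) :=
  osgood_log_comparison_general β C A T hA ρ ρ' hderiv hpos hode
end

section
/- Let β > 0, C > 0, A > 0, T > 0, and let u : ℝ² × [0,T] → ℝ² be continuous and satisfy the log-Lipschitz bound |u(x,t) − u(y,t)| ≤ (C/β) |x − y| log(A/|x − y|²) for all t ∈ [0,T] and all x, y ∈ ℝ² with 0 < |x − y|² ≤ A. Let x, y : [0,T] → ℝ² be C¹ curves with x'(t) = u(x(t), t) and y'(t) = u(y(t), t) for all t, and suppose |x(t) − y(t)|² ≤ A for all t ∈ [0,T]. Then for all t ∈ [0,T], |x(t) − y(t)| ≤ A^{(1 − e^{−2Ct/β})/2} · |x(0) − y(0)|^{e^{−2Ct/β}}. -/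
/-!
With `w = ‖x − y‖²`, Cauchy–Schwarz and the log-Lipschitz bound give
`w' ≤ κ w log (A / w)` with `κ = 2C/β` wherever `0 < w < A`. The function
`B(s) = A^(1 - e^(-μs)) k^(e^(-μs))` solves `B' = μ B log (A / B)` with `B 0 = k`, so for
`μ > κ` and `w 0 < k < A` it is a strict upper barrier: at a first contact point `w' < B'`.
Letting `μ → κ` and `k → w 0` bounds `w`, and the square root of that bound is the claim.
Taking `k > 0` also covers trajectories that meet, where `log (A / w)` is undefined.
-/

open Filter Real Set
open scoped Topology

noncomputable def logBarrier (A k μ s : ℝ) : ℝ :=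
  A ^ (1 - exp (-(μ * s))) * k ^ exp (-(μ * s))

section logBarrier

variable {A k μ : ℝ}

theorem logBarrier_zero (A k μ : ℝ) : logBarrier A k μ 0 = k := by
  simp [logBarrier]

theorem logBarrier_pos (hA : 0 < A) (hk : 0 < k) (s : ℝ) : 0 < logBarrier A k μ s := by
  unfold logBarrier; positivity

theorem logBarrier_self (hA : 0 < A) (μ s : ℝ) : logBarrier A A μ s = A := by
  rw [logBarrier, ← rpow_add hA, sub_add_cancel, rpow_one]

theorem logBarrier_lt (hk : 0 < k) (hkA : k < A) (s : ℝ) : logBarrier A k μ s < A := by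
  have hA : 0 < A := hk.trans hkA
  calc logBarrier A k μ s < logBarrier A A μ s := by unfold logBarrier; gcongr
    _ = A := logBarrier_self hA μ s

theorem logBarrier_sq {a k : ℝ} (ha : 0 ≤ a) (hk : 0 ≤ k) (μ s : ℝ) :
    logBarrier a k μ s ^ 2 = logBarrier (a ^ 2) (k ^ 2) μ s := by
  simp only [logBarrier, mul_pow, rpow_pow_comm ha, rpow_pow_comm hk]

theorem hasDerivAt_logBarrier (hA : 0 < A) (hk : 0 < k) (s : ℝ) :
    HasDerivAt (logBarrier A k μ)
      (μ * logBarrier A k μ s * log (A / logBarrier A k μ s)) s := by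
  have hexp : logBarrier A k μ = fun r => exp (log A + (log k - log A) * exp (-(μ * r))) := by
    funext r
    rw [logBarrier, rpow_def_of_pos hA, rpow_def_of_pos hk, ← exp_add]
    ring_nf
  have hlog : log (A / logBarrier A k μ s) = -((log k - log A) * exp (-(μ * s))) := by
    rw [log_div hA.ne' (logBarrier_pos hA hk s).ne', hexp, log_exp]
    ring
  have hlin : HasDerivAt (fun r => -(μ * r)) (-μ) s := by
    simpa using ((hasDerivAt_id s).const_mul (-μ))
  rw [hlog, hexp]
  convert ((hlin.exp.const_mul (log k - log A)).const_add (log A)).exp using 1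
  ring

theorem continuousAt_logBarrier (hA : 0 < A) (s : ℝ) :
    ContinuousAt (fun p : ℝ × ℝ => logBarrier A p.1 p.2 s) (k, μ) := by
  unfold logBarrier
  have he : ContinuousAt (fun p : ℝ × ℝ => exp (-(p.2 * s))) (k, μ) := by fun_prop
  exact (continuousAt_const.rpow (continuousAt_const.sub he) (Or.inl hA.ne')).mul
    (continuousAt_fst.rpow he (Or.inr (exp_pos _)))

end logBarrier

section comparison

variable {A T κ : ℝ} {w w' : ℝ → ℝ}

theorem le_logBarrier_of_rate_lt (hwc : ContinuousOn w (Icc 0 T))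
    (hw : ∀ s ∈ Ico 0 T, HasDerivWithinAt w (w' s) (Ici s) s)
    (hw' : ∀ s ∈ Ico 0 T, 0 < w s → w s < A → w' s ≤ κ * w s * log (A / w s))
    {μ k : ℝ} (hμ : κ < μ) (hk : 0 < k) (hw0 : w 0 < k)
    (hkA : k < A) : ∀ t ∈ Icc 0 T, w t ≤ logBarrier A k μ t := by
  refine image_le_of_deriv_right_lt_deriv_boundary hwc hw (by rw [logBarrier_zero]; exact hw0.le)
    (hasDerivAt_logBarrier (hk.trans hkA) hk) ?_
  intro s hs hcontact
  have hpos : 0 < w s := hcontact ▸ logBarrier_pos (hk.trans hkA) hk s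
  have hlt : w s < A := hcontact ▸ logBarrier_lt hk hkA s
  have hlog : 0 < log (A / w s) := log_pos ((one_lt_div hpos).mpr hlt)
  calc w' s ≤ κ * w s * log (A / w s) := hw' s hs hpos hlt
    _ < μ * w s * log (A / w s) := by gcongr
    _ = _ := by rw [hcontact]

theorem le_logBarrier (hwc : ContinuousOn w (Icc 0 T))
    (hw : ∀ s ∈ Ico 0 T, HasDerivWithinAt w (w' s) (Ici s) s)
    (hw' : ∀ s ∈ Ico 0 T, 0 < w s → w s < A → w' s ≤ κ * w s * log (A / w s))
    (hA : 0 < A) (hw0 : 0 ≤ w 0) (hwA : ∀ s ∈ Icc 0 T, w s ≤ A) :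
    ∀ t ∈ Icc 0 T, w t ≤ logBarrier A (w 0) κ t := by
  intro t ht
  rcases (hwA 0 ⟨le_rfl, ht.1.trans ht.2⟩).lt_or_eq with hw0A | hw0A
  · have hpath : Tendsto (fun ε => (w 0 + ε, κ + ε)) (𝓝[>] 0) (𝓝 (w 0, κ)) := by
      have : Continuous (fun ε : ℝ => (w 0 + ε, κ + ε)) := by fun_prop
      simpa using (this.tendsto 0).mono_left nhdsWithin_le_nhds
    refine ge_of_tendsto ((continuousAt_logBarrier hA t).tendsto.comp hpath) ?_
    filter_upwards [Ioo_mem_nhdsGT (sub_pos.mpr hw0A)] with ε ⟨hε, hεA⟩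
    exact le_logBarrier_of_rate_lt hwc hw hw' (by linarith) (by linarith) (by linarith)
      (by linarith) t ht
  · rw [hw0A, logBarrier_self hA]
    exact hwA t ht

end comparison

theorem logLipschitz_flow_separation_general
    (β C A T : ℝ) (hA : 0 < A)
    (u : EuclideanSpace ℝ (Fin 2) → ℝ → EuclideanSpace ℝ (Fin 2))
    (hu_loglip : ∀ t ∈ Set.Icc 0 T, ∀ x y : EuclideanSpace ℝ (Fin 2),
      0 < ‖x - y‖ ^ 2 → ‖x - y‖ ^ 2 ≤ A →
      ‖u x t - u y t‖ ≤ (C / β) * ‖x - y‖ * Real.log (A / ‖x - y‖ ^ 2))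
    (x y : ℝ → EuclideanSpace ℝ (Fin 2))
    (hx : ∀ t, HasDerivAt x (u (x t) t) t)
    (hy : ∀ t, HasDerivAt y (u (y t) t) t)
    (hsep : ∀ t ∈ Set.Icc 0 T, ‖x t - y t‖ ^ 2 ≤ A) :
    ∀ t ∈ Set.Icc 0 T,
      ‖x t - y t‖ ≤ A ^ ((1 - Real.exp (-(2 * C * t / β))) / 2)
            * ‖x 0 - y 0‖ ^ (Real.exp (-(2 * C * t / β))) := by
  intro t ht
  have hw s := ((hx s).sub (hy s)).norm_sq
  have hgrowth : ∀ s ∈ Ico 0 T, 0 < ‖x s - y s‖ ^ 2 → ‖x s - y s‖ ^ 2 < A →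
      2 * inner ℝ (x s - y s) (u (x s) s - u (y s) s)
        ≤ 2 * C / β * ‖x s - y s‖ ^ 2 * log (A / ‖x s - y s‖ ^ 2) := by
    intro s hs hpos hlt
    calc 2 * inner ℝ (x s - y s) (u (x s) s - u (y s) s)
        ≤ 2 * (‖x s - y s‖ * ‖u (x s) s - u (y s) s‖) := by
          gcongr; exact real_inner_le_norm _ _
      _ ≤ 2 * (‖x s - y s‖ * (C / β * ‖x s - y s‖ * log (A / ‖x s - y s‖ ^ 2))) := by
        gcongr; exact hu_loglip s (Ico_subset_Icc_self hs) _ _ hpos hlt.le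
      _ = _ := by ring
  have hwc := continuous_iff_continuousAt.2 fun s => (hw s).continuousAt
  have hsq := le_logBarrier hwc.continuousOn (fun s _ => (hw s).hasDerivWithinAt) hgrowth hA
    (sq_nonneg _) hsep t ht
  have hrhs : A ^ ((1 - exp (-(2 * C * t / β))) / 2) * ‖x 0 - y 0‖ ^ exp (-(2 * C * t / β))
      = logBarrier √A ‖x 0 - y 0‖ (2 * C / β) t := by
    rw [logBarrier, rpow_div_two_eq_sqrt _ hA.le, mul_div_right_comm]
  rw [hrhs,
    ← pow_le_pow_iff_left₀ (norm_nonneg _) (by unfold logBarrier; positivity) two_ne_zero,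
    logBarrier_sq (sqrt_nonneg A) (norm_nonneg _), sq_sqrt hA.le]
  exact hsq

/-- The deterministic flow-separation estimate (2.33) of Proposition 2.7 of the paper:
two trajectories of a log-Lipschitz velocity field `u` on `ℝ²` whose squared separation
stays below `A` satisfy
`|x(t) − y(t)| ≤ A^{(1−e^{−2Ct/β})/2} |x(0) − y(0)|^{e^{−2Ct/β}}` on `[0,T]`. -/
theorem logLipschitz_flow_separation
    (β C A T : ℝ) (hβ : 0 < β) (hC : 0 < C) (hA : 0 < A) (hT : 0 < T)
    (u : EuclideanSpace ℝ (Fin 2) → ℝ → EuclideanSpace ℝ (Fin 2))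
    (hu_cont : Continuous (fun q : EuclideanSpace ℝ (Fin 2) × ℝ => u q.1 q.2))
    (hu_loglip : ∀ t ∈ Set.Icc 0 T, ∀ x y : EuclideanSpace ℝ (Fin 2),
      0 < ‖x - y‖ ^ 2 → ‖x - y‖ ^ 2 ≤ A →
      ‖u x t - u y t‖ ≤ (C / β) * ‖x - y‖ * Real.log (A / ‖x - y‖ ^ 2))
    (x y : ℝ → EuclideanSpace ℝ (Fin 2))
    (hx : ∀ t, HasDerivAt x (u (x t) t) t)
    (hy : ∀ t, HasDerivAt y (u (y t) t) t)
    (hsep : ∀ t ∈ Set.Icc 0 T, ‖x t - y t‖ ^ 2 ≤ A) :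
    ∀ t ∈ Set.Icc 0 T,
      ‖x t - y t‖ ≤ A ^ ((1 - Real.exp (-(2 * C * t / β))) / 2)
            * ‖x 0 - y 0‖ ^ (Real.exp (-(2 * C * t / β))) :=
  logLipschitz_flow_separation_general β C A T hA u hu_loglip x y hx hy hsep
end
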